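/- arXiv:2601.21200 — 5 statements merged into one kernel-verified Lean document; each statement's English description precedes it below -/
import Mathlib

section
/- Let p : ℝ^d → [0, ∞) be Lebesgue integrable, let A ⊆ ℝ^d be a measurable set with ∫_A p(x) dx > 0, and let (δ_n)_{n≥1} be a sequence with δ_n ∈ (0, 1) for all n and δ_n → 0 as n → ∞. Writing x₁ for the first coordinate of x ∈ ℝ^d, it holds that liminf_{n→∞} (δ_n n)^{−2} ∫_A ( δ_n n cos(n x₁) / (1 + δ_n sin(n x₁)) )² p(x) dx ≥ (1/2) ∫_A p(x) dx. -/
/-!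
Because `1 - δ ≤ 1 + δ sin θ ≤ 1 + δ`, the normalised integral is squeezed between
`(1 ± δₙ)⁻² ∫_A cos² (n x₁) p`. Writing `cos² = (1 + cos (2 ·)) / 2`, the Riemann–Lebesgue lemma
shows that `∫_A cos² (n x₁) p → ½ ∫_A p`, so the normalised integrals even converge to `½ ∫_A p`.
-/

open MeasureTheory Filter Real
open scoped RealInnerProductSpace FourierTransform Topology

theorem tendsto_integral_cos_inner_mul_cocompact {V : Type*} [NormedAddCommGroup V]
    [InnerProductSpace ℝ V] [FiniteDimensional ℝ V] [MeasurableSpace V] [BorelSpace V]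
    {g : V → ℝ} (hg : Integrable g) :
    Tendsto (fun w : V => ∫ v, cos ⟪v, w⟫ * g v) (cocompact V) (𝓝 0) := by
  -- rescaling by `(2π)⁻¹` turns the Fourier character `𝐞 (-⟪v, w⟫)` into `exp (-i ⟪v, w⟫)`
  have hscale : Tendsto (fun w : V => (2 * π)⁻¹ • w) (cocompact V) (cocompact V) :=
    (Homeomorph.smulOfNeZero _ (by positivity)).toCocompactMap.cocompact_tendsto'
  have hfourier := (Complex.continuous_re.tendsto 0).comp
    ((tendsto_integral_exp_inner_smul_cocompact fun v => (g v : ℂ)).comp hscale)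
  rw [Complex.zero_re] at hfourier
  refine hfourier.congr fun w => ?_
  rw [Function.comp_apply, Function.comp_apply, ← RCLike.re_to_complex, ← integral_re
    ((Real.fourierIntegral_convergent_iff _).2 hg.ofReal)]
  refine integral_congr_ae (Eventually.of_forall fun v => ?_)
  simp only [Circle.smul_def, Real.fourierChar_apply, real_inner_smul_right, smul_eq_mul]
  rw [mul_neg, mul_inv_cancel_left₀ (by positivity), RCLike.re_to_complex, Complex.re_mul_ofReal,
    Complex.exp_ofReal_mul_I_re, cos_neg]

theorem tendsto_integral_cos_mul_apply_mul {ι : Type*} [Fintype ι] (i : ι)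
    {g : EuclideanSpace ℝ ι → ℝ} (hg : Integrable g) :
    Tendsto (fun t : ℝ => ∫ v, cos (t * v i) * g v) atTop (𝓝 0) := by
  classical
  have hdir : Tendsto (fun t : ℝ => t • EuclideanSpace.single i (1 : ℝ)) atTop
      (cocompact (EuclideanSpace ℝ ι)) := by
    rw [← Metric.cobounded_eq_cocompact, ← tendsto_norm_atTop_iff_cobounded]
    simpa [norm_smul] using tendsto_abs_atTop_atTop
  refine ((tendsto_integral_cos_inner_mul_cocompact hg).comp hdir).congr fun t => ?_
  simp [real_inner_smul_right, EuclideanSpace.inner_single_right, mul_comm]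

theorem tendsto_setIntegral_cos_sq_mul_apply_mul {ι : Type*} [Fintype ι] (i : ι)
    {g : EuclideanSpace ℝ ι → ℝ} (hg : Integrable g) {A : Set (EuclideanSpace ℝ ι)}
    (hA : MeasurableSet A) :
    Tendsto (fun t : ℝ => ∫ x in A, cos (t * x i) ^ 2 * g x) atTop
      (𝓝 (1 / 2 * ∫ x in A, g x)) := by
  have hcos : Tendsto (fun t : ℝ => ∫ x in A, cos (2 * t * x i) * g x) atTop (𝓝 0) := by
    refine ((tendsto_integral_cos_mul_apply_mul i (hg.indicator hA)).comp
      (tendsto_id.const_mul_atTop two_pos)).congr fun t => ?_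
    rw [← integral_indicator hA]
    refine integral_congr_ae (Eventually.of_forall fun x => ?_)
    by_cases hx : x ∈ A <;> simp [hx]
  have hsplit : ∀ t : ℝ, ∫ x in A, cos (t * x i) ^ 2 * g x =
      1 / 2 * (∫ x in A, g x) + 1 / 2 * ∫ x in A, cos (2 * t * x i) * g x := by
    intro t
    have hint : IntegrableOn (fun x => cos (2 * t * x i) * g x) A :=
      hg.integrableOn.bdd_mul (c := 1) (by fun_prop)
        (Eventually.of_forall fun x => (norm_eq_abs _).trans_le (abs_cos_le_one _))
    have hcos_sq : ∀ x : EuclideanSpace ℝ ι,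
        cos (t * x i) ^ 2 * g x = 1 / 2 * g x + 1 / 2 * (cos (2 * t * x i) * g x) := by
      intro x
      rw [cos_sq, ← mul_assoc]
      ring
    simp_rw [hcos_sq]
    rw [integral_add (hg.integrableOn.const_mul _) (hint.const_mul _), integral_const_mul,
      integral_const_mul]
  have hlim := (tendsto_const_nhds (x := 1 / 2 * ∫ x in A, g x)).add (hcos.const_mul (1 / 2))
  rw [mul_zero, add_zero] at hlim
  simpa only [hsplit] using hlim

theorem sq_cos_div_one_add_mul_sin_mem_Icc {δ : ℝ} (hδ₀ : 0 ≤ δ) (hδ₁ : δ < 1) (θ : ℝ) :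
    (cos θ / (1 + δ * sin θ)) ^ 2 ∈
      Set.Icc (((1 + δ) ^ 2)⁻¹ * cos θ ^ 2) (((1 - δ) ^ 2)⁻¹ * cos θ ^ 2) := by
  have hlow : 1 - δ ≤ 1 + δ * sin θ := by nlinarith [neg_one_le_sin θ]
  have hupp : 1 + δ * sin θ ≤ 1 + δ := by nlinarith [sin_le_one θ]
  have hpos : 0 < 1 - δ := sub_pos.2 hδ₁
  rw [div_pow, div_eq_inv_mul]
  exact ⟨mul_le_mul_of_nonneg_right (inv_anti₀ (pow_pos (hpos.trans_le hlow) 2) (by gcongr; linarith))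
      (sq_nonneg _),
    mul_le_mul_of_nonneg_right (inv_anti₀ (by positivity) (by gcongr)) (sq_nonneg _)⟩

theorem integral_sq_cos_div_one_add_mul_sin_mul_mem_Icc {α : Type*} [MeasurableSpace α]
    {μ : Measure α} {g : α → ℝ} (hg : Integrable g μ) (hg₀ : 0 ≤ g) {θ : α → ℝ}
    (hθ : Measurable θ) {δ : ℝ} (hδ₀ : 0 ≤ δ) (hδ₁ : δ < 1) :
    ∫ x, (cos (θ x) / (1 + δ * sin (θ x))) ^ 2 * g x ∂μ ∈
      Set.Icc (((1 + δ) ^ 2)⁻¹ * ∫ x, cos (θ x) ^ 2 * g x ∂μ)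
        (((1 - δ) ^ 2)⁻¹ * ∫ x, cos (θ x) ^ 2 * g x ∂μ) := by
  have hbound := fun x => sq_cos_div_one_add_mul_sin_mem_Icc hδ₀ hδ₁ (θ x)
  have hcos : Integrable (fun x => cos (θ x) ^ 2 * g x) μ :=
    hg.bdd_mul (c := 1) (by fun_prop) (Eventually.of_forall fun x => by
      rw [norm_eq_abs, abs_of_nonneg (sq_nonneg _)]
      exact cos_sq_le_one _)
  have hfrac : Integrable (fun x => (cos (θ x) / (1 + δ * sin (θ x))) ^ 2 * g x) μ := by
    refine (hcos.const_mul ((1 - δ) ^ 2)⁻¹).mono' ?_ (Eventually.of_forall fun x => ?_)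
    · exact (by fun_prop : Measurable fun x => (cos (θ x) / (1 + δ * sin (θ x))) ^ 2)
        |>.aestronglyMeasurable.mul hg.aestronglyMeasurable
    · rw [norm_eq_abs, abs_of_nonneg (mul_nonneg (sq_nonneg _) (hg₀ x)), ← mul_assoc]
      exact mul_le_mul_of_nonneg_right (hbound x).2 (hg₀ x)
  rw [← integral_const_mul, ← integral_const_mul]
  constructor
  · refine integral_mono (hcos.const_mul _) hfrac fun x => ?_
    rw [← mul_assoc]
    exact mul_le_mul_of_nonneg_right (hbound x).1 (hg₀ x)
  · refine integral_mono hfrac (hcos.const_mul _) fun x => ?_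
    rw [← mul_assoc]
    exact mul_le_mul_of_nonneg_right (hbound x).2 (hg₀ x)

theorem inv_sq_mul_integral_mul_div_sq_mul {α : Type*} [MeasurableSpace α] {μ : Measure α}
    {a : ℝ} (ha : a ≠ 0) (f b g : α → ℝ) :
    (a ^ 2)⁻¹ * ∫ x, (a * f x / b x) ^ 2 * g x ∂μ = ∫ x, (f x / b x) ^ 2 * g x ∂μ := by
  simp_rw [mul_div_assoc, mul_pow, mul_assoc]
  rw [integral_const_mul, inv_mul_cancel_left₀ (pow_ne_zero 2 ha)]

theorem stmt2_general (d : ℕ) (hd : 0 < d)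
    (p : EuclideanSpace ℝ (Fin d) → ℝ)
    (hp0 : ∀ x, 0 ≤ p x) (hp : Integrable p)
    (A : Set (EuclideanSpace ℝ (Fin d))) (hA : MeasurableSet A)
    (δ : ℕ → ℝ) (hδ : ∀ n, δ n ∈ Set.Ioo (0 : ℝ) 1)
    (hδ0 : Tendsto δ atTop (nhds 0)) :
    (1 / 2) * ∫ x in A, p x ≤
      liminf (fun n : ℕ =>
        ((δ n * (n : ℝ)) ^ 2)⁻¹ *
          ∫ x in A,
            (δ n * (n : ℝ) * Real.cos ((n : ℝ) * x ⟨0, hd⟩) /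
              (1 + δ n * Real.sin ((n : ℝ) * x ⟨0, hd⟩))) ^ 2 * p x) atTop := by
  set J : ℕ → ℝ := fun n => ∫ x in A, cos (n * x ⟨0, hd⟩) ^ 2 * p x
  have hJ : Tendsto J atTop (𝓝 (1 / 2 * ∫ x in A, p x)) :=
    (tendsto_setIntegral_cos_sq_mul_apply_mul _ hp hA).comp tendsto_natCast_atTop_atTop
  have hlower : Tendsto (fun n => ((1 + δ n) ^ 2)⁻¹ * J n) atTop (𝓝 (1 / 2 * ∫ x in A, p x)) := by
    simpa using (((hδ0.const_add 1).pow 2).inv₀ (by norm_num)).mul hJ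
  have hupper : Tendsto (fun n => ((1 - δ n) ^ 2)⁻¹ * J n) atTop (𝓝 (1 / 2 * ∫ x in A, p x)) := by
    simpa using (((hδ0.const_sub 1).pow 2).inv₀ (by norm_num)).mul hJ
  have hsandwich : ∀ᶠ n : ℕ in atTop,
      ((δ n * (n : ℝ)) ^ 2)⁻¹ * ∫ x in A, (δ n * (n : ℝ) * cos (n * x ⟨0, hd⟩) /
        (1 + δ n * sin (n * x ⟨0, hd⟩))) ^ 2 * p x ∈
      Set.Icc (((1 + δ n) ^ 2)⁻¹ * J n) (((1 - δ n) ^ 2)⁻¹ * J n) := by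
    filter_upwards [eventually_ge_atTop 1] with n hn
    have hδn : δ n * (n : ℝ) ≠ 0 := mul_ne_zero (hδ n).1.ne' (Nat.cast_pos.2 hn).ne'
    rw [inv_sq_mul_integral_mul_div_sq_mul hδn]
    exact integral_sq_cos_div_one_add_mul_sin_mul_mem_Icc hp.integrableOn hp0 (by fun_prop)
      (hδ n).1.le (hδ n).2
  exact (tendsto_of_tendsto_of_tendsto_of_le_of_le' hlower hupper
    (hsandwich.mono fun _ h => h.1) (hsandwich.mono fun _ h => h.2)).liminf_eq.ge

theorem stmt2 (d : ℕ) (hd : 0 < d)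
    (p : EuclideanSpace ℝ (Fin d) → ℝ)
    (hp0 : ∀ x, 0 ≤ p x) (hp : Integrable p)
    (A : Set (EuclideanSpace ℝ (Fin d))) (hA : MeasurableSet A)
    (hApos : 0 < ∫ x in A, p x)
    (δ : ℕ → ℝ) (hδ : ∀ n, δ n ∈ Set.Ioo (0 : ℝ) 1)
    (hδ0 : Tendsto δ atTop (nhds 0)) :
    (1 / 2) * ∫ x in A, p x ≤
      liminf (fun n : ℕ =>
        ((δ n * (n : ℝ)) ^ 2)⁻¹ *
          ∫ x in A,
            (δ n * (n : ℝ) * Real.cos ((n : ℝ) * x ⟨0, hd⟩) /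
              (1 + δ n * Real.sin ((n : ℝ) * x ⟨0, hd⟩))) ^ 2 * p x) atTop :=
  stmt2_general d hd p hp0 hp A hA δ hδ hδ0
end

section
/- There exists a universal constant C > 0 (independent of d, μ, λ, σ, ε) with the following property. Let μ be a probability measure on ℝ^d, λ ∈ (0, 1], σ > 0, and let f_μ be the Gaussian-smoothed density of μ. Then for every ε ∈ (0, 1), the probability measure with density f_μ assigns mass at most ε to the set { x ∈ ℝ^d : ‖∇ log f_μ(x)‖₂ > C √(d + log(1/ε)) / σ }. -/
open MeasureTheory Real

/-- The Gaussian kernel `(2πσ²)^{-d/2} exp(-‖x - λz‖²/(2σ²))`. -/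
noncomputable def gaussKernel (d : ℕ) (lam sig : ℝ)
    (x z : EuclideanSpace ℝ (Fin d)) : ℝ :=
  (2 * π * sig ^ 2) ^ (-(d : ℝ) / 2) * Real.exp (-‖x - lam • z‖ ^ 2 / (2 * sig ^ 2))

/-- The Gaussian-smoothed density of a measure `μ`. -/
noncomputable def smoothedDensity (d : ℕ) (lam sig : ℝ)
    (μ : Measure (EuclideanSpace ℝ (Fin d))) (x : EuclideanSpace ℝ (Fin d)) : ℝ :=
  ∫ z, gaussKernel d lam sig x z ∂μ

/-!
Write `f = (2πσ²)^{-d/2} m` with `m x = ∫ exp (-‖x - z‖² / (2σ²)) dν(z)`, where `ν` is the image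
of `μ` under `z ↦ λ z`. Then `σ² ∇ log f x` is the mean of `z - x` under the tilted probability
`exp (-‖x - z‖² / (2σ²)) dν(z) / m x`, and Jensen's inequality for the convex function
`s ↦ exp (s² / (4σ²))` under that tilted measure gives
`m x · exp (σ² ‖∇ log f x‖² / 4) ≤ ∫ exp (-‖x - z‖² / (4σ²)) dν(z)`.
Integrating in `x`, the score has exponential moment `∫ f exp (σ² ‖∇ log f‖² / 4) ≤ 2^{d/2}`, and
Chernoff's bound at level `d + log (1/ε)` yields the tail estimate with `C = 2`.
-/

open Set InnerProductSpace
open scoped ENNReal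

lemma mul_exp_neg_sq_div_le {σ : ℝ} (hσ : 0 < σ) (t : ℝ) : t * exp (-t ^ 2 / (2 * σ ^ 2)) ≤ σ := by
  rw [neg_div, exp_neg, ← div_eq_mul_inv, div_le_iff₀ (exp_pos _)]
  have hquad : t ≤ σ * (t ^ 2 / (2 * σ ^ 2) + 1) := by
    have : σ * (t ^ 2 / (2 * σ ^ 2) + 1) - t = ((t - σ) ^ 2 + σ ^ 2) / (2 * σ) := by
      field_simp; ring
    linarith [show 0 ≤ ((t - σ) ^ 2 + σ ^ 2) / (2 * σ) by positivity]
  exact hquad.trans (mul_le_mul_of_nonneg_left (add_one_le_exp _) hσ.le)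

lemma convexOn_exp_mul_sq {b : ℝ} (hb : 0 ≤ b) : ConvexOn ℝ univ fun t : ℝ => exp (b * t ^ 2) := by
  have hsq : ConvexOn ℝ univ fun t : ℝ => b * t ^ 2 := even_two.convexOn_pow.smul hb
  refine (convexOn_exp.subset (subset_univ _) ?_).comp hsq (exp_monotone.monotoneOn _)
  exact (isPreconnected_univ.image _
    (by fun_prop : Continuous fun t : ℝ => b * t ^ 2).continuousOn).convex

lemma exp_neg_mul_two_rpow_le (n : ℕ) {ε : ℝ} (hε : 0 < ε) :
    exp (-(n + log (1 / ε))) * 2 ^ ((n : ℝ) / 2) ≤ ε := by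
  have h2 : (2 : ℝ) ^ ((n : ℝ) / 2) ≤ exp n := by
    rw [rpow_def_of_pos two_pos, exp_le_exp]
    nlinarith [log_two_lt_d9, (Nat.cast_nonneg n : (0 : ℝ) ≤ n)]
  calc exp (-(n + log (1 / ε))) * 2 ^ ((n : ℝ) / 2) ≤ exp (-(n + log (1 / ε))) * exp n := by gcongr
    _ = ε := by
      rw [← exp_add, one_div, log_inv, show -(n + -log ε) + n = log ε by ring, exp_log hε]

theorem ConvexOn.map_integral_mul_div_le {Ω : Type*} [MeasurableSpace Ω] {μ : Measure Ω}
    {w u : Ω → ℝ} {φ : ℝ → ℝ} (hφ : ConvexOn ℝ univ φ) (hφc : Continuous φ) (hw : 0 ≤ᵐ[μ] w)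
    (hwi : Integrable w μ) (hw0 : 0 < ∫ x, w x ∂μ) (hwu : Integrable (fun x => w x * u x) μ)
    (hwφu : Integrable (fun x => w x * φ (u x)) μ) :
    φ ((∫ x, w x * u x ∂μ) / ∫ x, w x ∂μ) ≤ (∫ x, w x * φ (u x) ∂μ) / ∫ x, w x ∂μ := by
  set ρ := μ.withDensity fun x => ENNReal.ofReal (w x)
  have hdens : AEMeasurable (fun x => ENNReal.ofReal (w x)) μ := hwi.aemeasurable.ennreal_ofReal
  have hfin : ∀ᵐ x ∂μ, ENNReal.ofReal (w x) < ∞ := ae_of_all _ fun _ => ENNReal.ofReal_lt_top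
  have hweight : ∀ᵐ x ∂μ, (ENNReal.ofReal (w x)).toReal = w x :=
    hw.mono fun x hx => ENNReal.toReal_ofReal hx
  have hρ_integral (g : Ω → ℝ) : ∫ x, g x ∂ρ = ∫ x, w x * g x ∂μ := by
    rw [integral_withDensity_eq_integral_toReal_smul₀ hdens hfin]
    exact integral_congr_ae (hweight.mono fun x hx => by simp only [smul_eq_mul, hx])
  have hρ_integrable {g : Ω → ℝ} (hg : Integrable (fun x => w x * g x) μ) : Integrable g ρ := by
    rw [integrable_withDensity_iff_integrable_smul₀' hdens hfin]
    exact hg.congr (hweight.mono fun x hx => by simp only [smul_eq_mul, hx])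
  have hρ_univ : ρ.real univ = ∫ x, w x ∂μ := by simpa using hρ_integral 1
  have : IsFiniteMeasure ρ := isFiniteMeasure_withDensity_ofReal hwi.2
  have : NeZero ρ := ⟨fun h => by simp [h] at hρ_univ; linarith⟩
  have := hφ.map_average_le hφc.continuousOn isClosed_univ (ae_of_all _ fun _ => mem_univ _)
    (hρ_integrable hwu) (hρ_integrable hwφu)
  simpa only [average_eq, hρ_univ, hρ_integral, smul_eq_mul, inv_mul_eq_div] using this

theorem measure_lt_le_exp_neg_mul_lintegral {α : Type*} [MeasurableSpace α] {P : Measure α}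
    {h : α → ℝ} (hh : AEMeasurable h P) (t : ℝ) :
    P {x | t < h x} ≤ ENNReal.ofReal (exp (-t)) * ∫⁻ x, ENNReal.ofReal (exp (h x)) ∂P := by
  have hmarkov := mul_meas_ge_le_lintegral₀ (hh.exp.ennreal_ofReal) (ENNReal.ofReal (exp t))
  have hsub : {x | t < h x} ⊆ {x | ENNReal.ofReal (exp t) ≤ ENNReal.ofReal (exp (h x))} :=
    fun x hx => ENNReal.ofReal_le_ofReal (exp_le_exp.2 (le_of_lt hx))
  calc P {x | t < h x}
      = ENNReal.ofReal (exp (-t)) * ENNReal.ofReal (exp t) * P {x | t < h x} := by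
        rw [← ENNReal.ofReal_mul (exp_pos _).le, ← exp_add, neg_add_cancel, exp_zero,
          ENNReal.ofReal_one, one_mul]
    _ ≤ ENNReal.ofReal (exp (-t)) * ∫⁻ x, ENNReal.ofReal (exp (h x)) ∂P := by
        rw [mul_assoc]
        gcongr
        exact (mul_le_mul_right (measure_mono hsub) _).trans hmarkov

section GaussConv

variable {E : Type*} [NormedAddCommGroup E] [MeasurableSpace E]

/-- `(2πσ²)^{n/2}` times the density of `ν ∗ N(0, σ² I)` on an `n`-dimensional space. -/
noncomputable def gaussConv (σ : ℝ) (ν : Measure E) (x : E) : ℝ :=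
  ∫ z, exp (-‖x - z‖ ^ 2 / (2 * σ ^ 2)) ∂ν

variable [BorelSpace E] [SecondCountableTopology E] {ν : Measure E} [IsFiniteMeasure ν]

lemma integrable_exp_neg_sq_dist_div {c : ℝ} (hc : 0 ≤ c) (x : E) :
    Integrable (fun z => exp (-‖x - z‖ ^ 2 / c)) ν := by
  refine Integrable.of_bound (by fun_prop) 1 (ae_of_all _ fun z => ?_)
  rw [Real.norm_of_nonneg (exp_pos _).le, exp_le_one_iff, neg_div]
  exact neg_nonpos.2 (by positivity)

lemma gaussConv_pos [NeZero ν] (σ : ℝ) (x : E) : 0 < gaussConv σ ν x :=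
  integral_exp_pos (integrable_exp_neg_sq_dist_div (c := 2 * σ ^ 2) (by positivity) x)

end GaussConv

section GaussConvGradient

variable {E : Type*} [NormedAddCommGroup E] [InnerProductSpace ℝ E] {σ : ℝ}

lemma norm_exp_neg_sq_dist_div_smul_sub_le (hσ : 0 < σ) (x z : E) :
    ‖(exp (-‖x - z‖ ^ 2 / (2 * σ ^ 2)) / σ ^ 2) • (z - x)‖ ≤ σ⁻¹ := by
  rw [norm_smul, norm_sub_rev z x, Real.norm_of_nonneg (by positivity), div_mul_eq_mul_div,
    mul_comm, div_le_iff₀ (by positivity), show σ⁻¹ * σ ^ 2 = σ by field_simp]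
  exact mul_exp_neg_sq_div_le hσ _

variable [CompleteSpace E]

lemma hasGradientAt_exp_neg_sq_dist (σ : ℝ) (x z : E) :
    HasGradientAt (fun y => exp (-‖y - z‖ ^ 2 / (2 * σ ^ 2)))
      ((exp (-‖x - z‖ ^ 2 / (2 * σ ^ 2)) / σ ^ 2) • (z - x)) x := by
  rw [hasGradientAt_iff_hasFDerivAt]
  have hsq : HasFDerivAt (fun y : E => ‖y - z‖ ^ 2) (2 • innerSL ℝ (x - z)) x := by
    simpa using ((hasFDerivAt_id x).sub_const z).norm_sq
  have hfun : (fun y => exp (-‖y - z‖ ^ 2 / (2 * σ ^ 2)))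
      = fun y => exp (-(2 * σ ^ 2)⁻¹ * ‖y - z‖ ^ 2) := by
    ext y; ring_nf
  rw [hfun]
  refine (hsq.const_mul _).exp.congr_fderiv (ContinuousLinearMap.ext fun v => ?_)
  simp only [smul_apply, innerSL_apply_apply, toDual_apply_apply,
    real_inner_smul_left, inner_sub_left, smul_eq_mul, nsmul_eq_mul]
  ring_nf

lemma gradient_log_const_mul {f : E → ℝ} {c : ℝ} (hc : c ≠ 0) (hf : ∀ x, f x ≠ 0) :
    gradient (fun y => log (c * f y)) = gradient fun y => log (f y) := by
  have hlog : (fun y => log (c * f y)) = fun y => log c + log (f y) :=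
    funext fun y => log_mul hc (hf y)
  ext1 x
  simp only [hlog, gradient, fderiv_const_add]

variable [MeasurableSpace E] [BorelSpace E] [SecondCountableTopology E]
  {ν : Measure E} [IsFiniteMeasure ν]

lemma hasGradientAt_gaussConv (hσ : 0 < σ) (x : E) :
    HasGradientAt (gaussConv σ ν)
      (∫ z, (exp (-‖x - z‖ ^ 2 / (2 * σ ^ 2)) / σ ^ 2) • (z - x) ∂ν) x := by
  have hdual := (toDual ℝ E).toLinearIsometry.integral_comp_comm (μ := ν)
    fun z => (exp (-‖x - z‖ ^ 2 / (2 * σ ^ 2)) / σ ^ 2) • (z - x)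
  rw [LinearIsometryEquiv.coe_toLinearIsometry] at hdual
  rw [hasGradientAt_iff_hasFDerivAt, ← hdual]
  refine hasFDerivAt_integral_of_dominated_of_fderiv_le (bound := fun _ => σ⁻¹)
    (F := fun y z => exp (-‖y - z‖ ^ 2 / (2 * σ ^ 2)))
    (F' := fun y z =>
      (toDual ℝ E).toLinearIsometry ((exp (-‖y - z‖ ^ 2 / (2 * σ ^ 2)) / σ ^ 2) • (z - y)))
    Filter.univ_mem
    (Filter.Eventually.of_forall fun y => (by fun_prop : Continuous _).aestronglyMeasurable)
    (integrable_exp_neg_sq_dist_div (c := 2 * σ ^ 2) (by positivity) x)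
    ((toDual ℝ E).toLinearIsometry.continuous.comp_aestronglyMeasurable
      (by fun_prop : Continuous _).aestronglyMeasurable) ?_ (integrable_const _) ?_
  · exact ae_of_all _ fun z y _ => by
      simpa only [LinearIsometryEquiv.coe_toLinearIsometry, LinearIsometryEquiv.norm_map]
        using norm_exp_neg_sq_dist_div_smul_sub_le hσ y z
  · exact ae_of_all _ fun z y _ => (hasGradientAt_exp_neg_sq_dist σ y z).hasFDerivAt

lemma continuous_gaussConv (hσ : 0 < σ) : Continuous (gaussConv σ ν) :=
  continuous_iff_continuousAt.2 fun x =>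
    (hasGradientAt_gaussConv hσ x).differentiableAt.continuousAt

lemma hasGradientAt_log_gaussConv [NeZero ν] (hσ : 0 < σ) (x : E) :
    HasGradientAt (fun y => log (gaussConv σ ν y))
      ((gaussConv σ ν x)⁻¹ • ∫ z, (exp (-‖x - z‖ ^ 2 / (2 * σ ^ 2)) / σ ^ 2) • (z - x) ∂ν) x := by
  rw [hasGradientAt_iff_hasFDerivAt, map_smulₛₗ]
  exact (hasGradientAt_gaussConv hσ x).hasFDerivAt.log (gaussConv_pos σ x).ne'

lemma sq_mul_norm_gradient_log_gaussConv_le [NeZero ν] (hσ : 0 < σ) (x : E) :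
    σ ^ 2 * ‖gradient (fun y => log (gaussConv σ ν y)) x‖
      ≤ (∫ z, exp (-‖x - z‖ ^ 2 / (2 * σ ^ 2)) * ‖x - z‖ ∂ν) / gaussConv σ ν x := by
  set A := ∫ z, exp (-‖x - z‖ ^ 2 / (2 * σ ^ 2)) * ‖x - z‖ ∂ν
  have hnorm : ∫ z, ‖(exp (-‖x - z‖ ^ 2 / (2 * σ ^ 2)) / σ ^ 2) • (z - x)‖ ∂ν = A / σ ^ 2 := by
    rw [← integral_div]
    congr 1 with z
    rw [norm_smul, norm_sub_rev z x, Real.norm_of_nonneg (by positivity)]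
    ring
  have hm := gaussConv_pos (ν := ν) σ x
  rw [(hasGradientAt_log_gaussConv hσ x).gradient, norm_smul, norm_inv, Real.norm_of_nonneg hm.le]
  calc _ ≤ σ ^ 2 * ((gaussConv σ ν x)⁻¹ * (A / σ ^ 2)) := by
        gcongr
        exact hnorm ▸ norm_integral_le_integral_norm _
    _ = A / gaussConv σ ν x := by field_simp

lemma gaussConv_mul_exp_sq_norm_gradient_log_le [NeZero ν] (hσ : 0 < σ) (x : E) :
    gaussConv σ ν x * exp (σ ^ 2 * ‖gradient (fun y => log (gaussConv σ ν y)) x‖ ^ 2 / 4)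
      ≤ ∫ z, exp (-‖x - z‖ ^ 2 / (4 * σ ^ 2)) ∂ν := by
  set m := gaussConv σ ν x
  have hm : 0 < m := gaussConv_pos σ x
  set a := (∫ z, exp (-‖x - z‖ ^ 2 / (2 * σ ^ 2)) * ‖x - z‖ ∂ν) / m
  have htilt (z : E) : exp (-‖x - z‖ ^ 2 / (2 * σ ^ 2)) * exp ((4 * σ ^ 2)⁻¹ * ‖x - z‖ ^ 2)
      = exp (-‖x - z‖ ^ 2 / (4 * σ ^ 2)) := by
    rw [← exp_add]; congr 1; field_simp; ring
  have hwu : Integrable (fun z => exp (-‖x - z‖ ^ 2 / (2 * σ ^ 2)) * ‖x - z‖) ν := by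
    refine Integrable.of_bound (by fun_prop) σ (ae_of_all _ fun z => ?_)
    rw [Real.norm_of_nonneg (by positivity), mul_comm]
    exact mul_exp_neg_sq_div_le hσ _
  have hwφu : Integrable (fun z => exp (-‖x - z‖ ^ 2 / (2 * σ ^ 2)) *
      exp ((4 * σ ^ 2)⁻¹ * ‖x - z‖ ^ 2)) ν := by
    simpa only [htilt] using
      integrable_exp_neg_sq_dist_div (ν := ν) (c := 4 * σ ^ 2) (by positivity) x
  have hjensen := (convexOn_exp_mul_sq (by positivity)).map_integral_mul_div_le (by fun_prop)
    (ae_of_all _ fun z => (exp_pos _).le)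
    (integrable_exp_neg_sq_dist_div (c := 2 * σ ^ 2) (by positivity) x) hm hwu hwφu
  simp only [htilt] at hjensen
  set s := ‖gradient (fun y => log (gaussConv σ ν y)) x‖
  have hscore : σ ^ 2 * s ≤ a := sq_mul_norm_gradient_log_gaussConv_le hσ x
  have hexponent : σ ^ 2 * s ^ 2 / 4 ≤ (4 * σ ^ 2)⁻¹ * a ^ 2 :=
    calc σ ^ 2 * s ^ 2 / 4 = (4 * σ ^ 2)⁻¹ * (σ ^ 2 * s) ^ 2 := by field_simp
      _ ≤ (4 * σ ^ 2)⁻¹ * a ^ 2 := by gcongr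
  calc m * exp (σ ^ 2 * s ^ 2 / 4) ≤ m * exp ((4 * σ ^ 2)⁻¹ * a ^ 2) := by gcongr
    _ ≤ m * ((∫ z, exp (-‖x - z‖ ^ 2 / (4 * σ ^ 2)) ∂ν) / m) :=
        mul_le_mul_of_nonneg_left hjensen hm.le
    _ = ∫ z, exp (-‖x - z‖ ^ 2 / (4 * σ ^ 2)) ∂ν := mul_div_cancel₀ _ hm.ne'

end GaussConvGradient

section Volume

variable {E : Type*} [NormedAddCommGroup E] [InnerProductSpace ℝ E] [FiniteDimensional ℝ E]
  [MeasurableSpace E] [BorelSpace E] {ν : Measure E} [IsProbabilityMeasure ν] {σ : ℝ}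

lemma lintegral_integral_exp_neg_sq_dist_div {c : ℝ} (hc : 0 < c) :
    ∫⁻ x, ENNReal.ofReal (∫ z, exp (-‖x - z‖ ^ 2 / c) ∂ν)
      = ENNReal.ofReal ((π * c) ^ (Module.finrank ℝ E / 2 : ℝ)) := by
  have hgauss (z : E) : ∫ x, exp (-‖x - z‖ ^ 2 / c) = (π * c) ^ (Module.finrank ℝ E / 2 : ℝ) := by
    have hfun : (fun x : E => exp (-‖x‖ ^ 2 / c)) = fun x => exp (-c⁻¹ * ‖x‖ ^ 2) := by
      ext x; ring_nf
    rw [integral_sub_right_eq_self (fun x => exp (-‖x‖ ^ 2 / c)) z, hfun,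
      GaussianFourier.integral_rexp_neg_mul_sq_norm (inv_pos.2 hc), div_inv_eq_mul]
  have hint (z : E) : Integrable fun x => exp (-‖x - z‖ ^ 2 / c) :=
    .of_integral_ne_zero (by rw [hgauss]; positivity)
  calc ∫⁻ x, ENNReal.ofReal (∫ z, exp (-‖x - z‖ ^ 2 / c) ∂ν)
      = ∫⁻ x, ∫⁻ z, ENNReal.ofReal (exp (-‖x - z‖ ^ 2 / c)) ∂ν :=
        lintegral_congr fun x => ofReal_integral_eq_lintegral_ofReal
          (integrable_exp_neg_sq_dist_div hc.le x) (ae_of_all _ fun _ => (exp_pos _).le)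
    _ = ∫⁻ z, (∫⁻ x, ENNReal.ofReal (exp (-‖x - z‖ ^ 2 / c))) ∂ν :=
        lintegral_lintegral_swap (Measurable.aemeasurable (by fun_prop))
    _ = ∫⁻ _ : E, ENNReal.ofReal ((π * c) ^ (Module.finrank ℝ E / 2 : ℝ)) ∂ν :=
        lintegral_congr fun z => by
          rw [← hgauss z, ofReal_integral_eq_lintegral_ofReal (hint z)
            (ae_of_all _ fun _ => (exp_pos _).le)]
    _ = ENNReal.ofReal ((π * c) ^ (Module.finrank ℝ E / 2 : ℝ)) := by simp

lemma lintegral_gaussConv_mul_exp_sq_norm_gradient_log_le (hσ : 0 < σ) :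
    ∫⁻ x, ENNReal.ofReal (gaussConv σ ν x *
        exp (σ ^ 2 * ‖gradient (fun y => log (gaussConv σ ν y)) x‖ ^ 2 / 4))
      ≤ ENNReal.ofReal ((π * (4 * σ ^ 2)) ^ (Module.finrank ℝ E / 2 : ℝ)) := by
  rw [← lintegral_integral_exp_neg_sq_dist_div (ν := ν) (by positivity)]
  exact lintegral_mono fun x =>
    ENNReal.ofReal_le_ofReal (gaussConv_mul_exp_sq_norm_gradient_log_le hσ x)

theorem withDensity_gaussConv_norm_gradient_log_tail_le (hσ : 0 < σ) {ε : ℝ} (hε : 0 < ε) :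
    (volume.withDensity fun x =>
        ENNReal.ofReal ((2 * π * σ ^ 2) ^ (-(Module.finrank ℝ E : ℝ) / 2) * gaussConv σ ν x))
      {x | 2 * √(Module.finrank ℝ E + log (1 / ε)) / σ
        < ‖gradient (fun y => log (gaussConv σ ν y)) x‖}
      ≤ ENNReal.ofReal ε := by
  set n := Module.finrank ℝ E
  have hc : (2 * π * σ ^ 2) ^ (-(n : ℝ) / 2) * (π * (4 * σ ^ 2)) ^ (n / 2 : ℝ)
      = 2 ^ (n / 2 : ℝ) := by
    rw [neg_div, rpow_neg (by positivity), inv_mul_eq_div,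
      ← div_rpow (by positivity) (by positivity)]
    congr 1; field_simp; ring
  set c := (2 * π * σ ^ 2) ^ (-(n : ℝ) / 2)
  set t := (n : ℝ) + log (1 / ε)
  set G := fun x => ‖gradient (fun y => log (gaussConv σ ν y)) x‖
  set P := volume.withDensity fun x => ENNReal.ofReal (c * gaussConv σ ν x)
  have hG : Measurable G :=
    ((toDual ℝ E).symm.continuous.measurable.comp (measurable_fderiv ℝ _)).norm
  have hdensity : Measurable fun x => ENNReal.ofReal (c * gaussConv σ ν x) :=
    ENNReal.measurable_ofReal.comp ((continuous_gaussConv hσ).const_mul c).measurable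
  have htail : {x | 2 * √t / σ < G x} ⊆ {x | t < σ ^ 2 * G x ^ 2 / 4} := by
    intro x (hx : 2 * √t / σ < G x)
    change t < σ ^ 2 * G x ^ 2 / 4
    replace hx : √t < σ * G x / 2 := by linarith [(div_lt_iff₀ hσ).1 hx]
    rcases le_or_gt 0 t with ht | ht
    · nlinarith [sq_sqrt ht, sqrt_nonneg t]
    · exact lt_of_lt_of_le ht (by positivity)
  calc P {x | 2 * √t / σ < G x} ≤ P {x | t < σ ^ 2 * G x ^ 2 / 4} := measure_mono htail
    _ ≤ ENNReal.ofReal (exp (-t)) * ∫⁻ x, ENNReal.ofReal (exp (σ ^ 2 * G x ^ 2 / 4)) ∂P :=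
        measure_lt_le_exp_neg_mul_lintegral (by fun_prop) t
    _ = ENNReal.ofReal (exp (-t)) * (ENNReal.ofReal c *
          ∫⁻ x, ENNReal.ofReal (gaussConv σ ν x * exp (σ ^ 2 * G x ^ 2 / 4))) := by
        congr 1
        rw [lintegral_withDensity_eq_lintegral_mul₀ hdensity.aemeasurable (by fun_prop),
          ← lintegral_const_mul' _ _ ENNReal.ofReal_ne_top]
        refine lintegral_congr fun x => ?_
        have hcm : 0 ≤ c * gaussConv σ ν x := (mul_pos (by positivity) (gaussConv_pos σ x)).le
        rw [Pi.mul_apply, ← ENNReal.ofReal_mul hcm, ← ENNReal.ofReal_mul (by positivity),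
          mul_assoc]
    _ ≤ ENNReal.ofReal (exp (-t)) * (ENNReal.ofReal c *
          ENNReal.ofReal ((π * (4 * σ ^ 2)) ^ (n / 2 : ℝ))) := by
        gcongr
        exact lintegral_gaussConv_mul_exp_sq_norm_gradient_log_le hσ
    _ ≤ ENNReal.ofReal ε := by
        rw [← ENNReal.ofReal_mul (by positivity), hc, ← ENNReal.ofReal_mul (exp_pos _).le]
        exact ENNReal.ofReal_le_ofReal (exp_neg_mul_two_rpow_le n hε)

end Volume

lemma smoothedDensity_eq_mul_gaussConv (d : ℕ) (lam sig : ℝ)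
    (μ : Measure (EuclideanSpace ℝ (Fin d))) :
    smoothedDensity d lam sig μ
      = fun x => (2 * π * sig ^ 2) ^ (-(d : ℝ) / 2) * gaussConv sig (μ.map (lam • ·)) x := by
  ext x
  rw [smoothedDensity, gaussConv, integral_map (measurable_const_smul lam).aemeasurable
    (by fun_prop : Continuous _).aestronglyMeasurable, ← integral_const_mul]
  rfl

theorem stmt7 : ∃ C : ℝ, 0 < C ∧
    ∀ (d : ℕ) (μ : Measure (EuclideanSpace ℝ (Fin d))), IsProbabilityMeasure μ →
    ∀ lam sig : ℝ, lam ∈ Set.Ioc (0 : ℝ) 1 → 0 < sig →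
    ∀ ε : ℝ, 0 < ε → ε < 1 →
      (volume.withDensity fun x => ENNReal.ofReal (smoothedDensity d lam sig μ x))
        {x | C * Real.sqrt ((d : ℝ) + Real.log (1 / ε)) / sig <
          ‖gradient (fun x => Real.log (smoothedDensity d lam sig μ x)) x‖}
      ≤ ENNReal.ofReal ε := by
  refine ⟨2, two_pos, fun d μ _ lam sig _ hσ ε hε _ => ?_⟩
  have : IsProbabilityMeasure (μ.map (lam • ·)) :=
    Measure.isProbabilityMeasure_map (measurable_const_smul lam).aemeasurable
  simp only [smoothedDensity_eq_mul_gaussConv]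
  rw [gradient_log_const_mul (by positivity) fun x => (gaussConv_pos sig x).ne']
  simpa only [finrank_euclideanSpace_fin] using
    withDensity_gaussConv_norm_gradient_log_tail_le (ν := μ.map (lam • ·)) hσ hε
end

section
/- Let (𝒳, 𝒜, μ) be a probability space, 𝒴 a finite label set, and p, q conditional label probabilities on 𝒴 with q(y'|x) > 0 for all x, y'. Suppose the expected conditional KL divergence satisfies ∫ Σ_{y'∈𝒴} p(y'|x) log(p(y'|x)/q(y'|x)) dμ(x) ≤ ε². Fix a label y with P(y) = ∫ p(y|x) dμ(x) > 0, and set Q(y) = ∫ q(y|x) dμ(x). Then the posterior KL divergence satisfies ∫ (p(y|x)/P(y)) · log( (p(y|x)/P(y)) / (q(y|x)/Q(y)) ) dμ(x) ≤ ε² / P(y). -/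
/-!
Write `T_z(x) = p(z|x) log(p(z|x)/q(z|x))`, so that the expected conditional KL divergence is
`∑_z ∫ T_z`. The posterior KL divergence for the label `z` equals `(∫ T_z - P(z) log(P(z)/Q(z))) / P(z)`,
and the numerator is nonnegative for every `z` by the log-sum inequality. Hence the numerator for `y`
is at most `∑_z (∫ T_z - P(z) log(P(z)/Q(z)))`, which is the expected conditional KL divergence minus
the KL divergence of the label marginals `P` and `Q`, hence at most `ε²` by Gibbs' inequality.
-/

open MeasureTheory Real

lemma sub_le_mul_log_div {a b : ℝ} (ha : 0 ≤ a) (hb : 0 < b) : a - b ≤ a * log (a / b) := by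
  rcases ha.eq_or_lt with rfl | ha
  · simpa using hb.le
  · have h := one_sub_inv_le_log_of_pos (div_pos ha hb)
    rw [inv_div] at h
    calc a - b = a * (1 - b / a) := by field_simp
      _ ≤ a * log (a / b) := mul_le_mul_of_nonneg_left h ha.le

lemma mul_log_div_mul (a : ℝ) {b c : ℝ} (hb : b ≠ 0) (hc : c ≠ 0) :
    a * log (a / (b * c)) = a * log (a / b) - a * log c := by
  rcases eq_or_ne a 0 with rfl | ha
  · simp
  · rw [← div_div, log_div (div_ne_zero ha hb) hc, mul_sub]

lemma Finset.sum_mul_log_div_nonneg {ι : Type*} (s : Finset ι) {P Q : ι → ℝ}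
    (hP : ∀ i ∈ s, 0 ≤ P i) (hQ : ∀ i ∈ s, 0 < Q i) (hPQ : ∑ i ∈ s, P i = ∑ i ∈ s, Q i) :
    0 ≤ ∑ i ∈ s, P i * log (P i / Q i) := by
  have h := Finset.sum_le_sum fun i hi => sub_le_mul_log_div (hP i hi) (hQ i hi)
  rwa [Finset.sum_sub_distrib, hPQ, sub_self] at h

namespace MeasureTheory

variable {α : Type*} [MeasurableSpace α] {μ : Measure α} {f g : α → ℝ}

lemma Integrable.of_le_of_integrable_sum {ι : Type*} [Fintype ι] {F G : ι → α → ℝ}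
    (hF : ∀ i, AEStronglyMeasurable (F i) μ) (hG : ∀ i, Integrable (G i) μ)
    (hGF : ∀ i x, G i x ≤ F i x) (hsum : Integrable (fun x => ∑ i, F i x) μ) (i : ι) :
    Integrable (F i) μ := by
  have hsum_sub : Integrable (fun x => ∑ j, (F j x - G j x)) μ := by
    simp only [Finset.sum_sub_distrib]
    exact hsum.sub (integrable_finsetSum _ fun j _ => hG j)
  have h_sub : Integrable (fun x => F i x - G i x) μ := by
    refine hsum_sub.mono' ((hF i).sub (hG i).aestronglyMeasurable) (ae_of_all _ fun x => ?_)
    rw [Real.norm_of_nonneg (sub_nonneg.2 (hGF i x))]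
    exact Finset.single_le_sum (fun j _ => sub_nonneg.2 (hGF j x)) (Finset.mem_univ i)
  exact (h_sub.add (hG i)).congr (ae_of_all _ fun x => sub_add_cancel (F i x) (G i x))

lemma integrable_apply_of_sum_eq_one [IsFiniteMeasure μ] {ι : Type*} [Fintype ι]
    {r : α → ι → ℝ} (hr : ∀ i, Measurable fun x => r x i) (hr0 : ∀ x i, 0 ≤ r x i)
    (hsum : ∀ x, ∑ i, r x i = 1) (i : ι) : Integrable (fun x => r x i) μ :=
  .of_bound (hr i).aestronglyMeasurable 1 (ae_of_all _ fun x => by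
    rw [norm_of_nonneg (hr0 x i), ← hsum x]
    exact Finset.single_le_sum (fun j _ => hr0 x j) (Finset.mem_univ i))

lemma sum_integral_eq_one [IsProbabilityMeasure μ] {ι : Type*} [Fintype ι] {r : α → ι → ℝ}
    (hr : ∀ i, Integrable (fun x => r x i) μ) (hsum : ∀ x, ∑ i, r x i = 1) :
    ∑ i, ∫ x, r x i ∂μ = 1 := by
  simp [← integral_finsetSum _ fun i _ => hr i, hsum]

lemma integral_pos_of_integral_pos (hf : ∀ x, 0 ≤ f x) (hg : ∀ x, 0 < g x) (hfi : Integrable f μ)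
    (hgi : Integrable g μ) (hfpos : 0 < ∫ x, f x ∂μ) : 0 < ∫ x, g x ∂μ := by
  rw [integral_pos_iff_support_of_nonneg (fun x => hf x) hfi] at hfpos
  rw [integral_pos_iff_support_of_nonneg (fun x => (hg x).le) hgi]
  exact hfpos.trans_le (measure_mono fun x _ => (hg x).ne')

lemma integral_sub_integral_le_integral_mul_log_div (hf : ∀ x, 0 ≤ f x) (hg : ∀ x, 0 < g x)
    (hfi : Integrable f μ) (hgi : Integrable g μ)
    (hfg : Integrable (fun x => f x * log (f x / g x)) μ) :
    ∫ x, f x ∂μ - ∫ x, g x ∂μ ≤ ∫ x, f x * log (f x / g x) ∂μ := by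
  rw [← integral_sub hfi hgi]
  exact integral_mono (hfi.sub hgi) hfg fun x => sub_le_mul_log_div (hf x) (hg x)

/-- The log-sum inequality. -/
lemma mul_log_div_integral_le_integral_mul_log_div (hf : ∀ x, 0 ≤ f x) (hg : ∀ x, 0 < g x)
    (hfi : Integrable f μ) (hgi : Integrable g μ)
    (hfg : Integrable (fun x => f x * log (f x / g x)) μ) :
    (∫ x, f x ∂μ) * log ((∫ x, f x ∂μ) / ∫ x, g x ∂μ) ≤ ∫ x, f x * log (f x / g x) ∂μ := by
  rcases (integral_nonneg (f := fun x => f x) fun x => hf x).eq_or_lt with hP | hP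
  · have hf0 : f =ᵐ[μ] 0 := (integral_eq_zero_iff_of_nonneg (fun x => hf x) hfi).1 hP.symm
    rw [← hP, zero_mul, integral_eq_zero_of_ae (hf0.mono fun x hx => by simp [hx])]
  have hQ := integral_pos_of_integral_pos hf hg hfi hgi hP
  set c := (∫ x, f x ∂μ) / ∫ x, g x ∂μ with hc_def
  have hc : 0 < c := div_pos hP hQ
  -- compare `f` with `g` rescaled to the same total mass
  have hfgc : Integrable (fun x => f x * log (f x / (g x * c))) μ := by
    simp only [mul_log_div_mul _ (hg _).ne' hc.ne']
    exact hfg.sub (hfi.mul_const _)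
  have key := integral_sub_integral_le_integral_mul_log_div (g := fun x => g x * c) hf
    (fun x => mul_pos (hg x) hc) hfi (hgi.mul_const c) hfgc
  simp only [mul_log_div_mul _ (hg _).ne' hc.ne'] at key
  rw [integral_sub hfg (hfi.mul_const _), integral_mul_const, integral_mul_const, hc_def,
    mul_div_cancel₀ _ hQ.ne', sub_self] at key
  linarith

lemma integral_posterior_mul_log_div (hg : ∀ x, 0 < g x) (hfi : Integrable f μ)
    (hfg : Integrable (fun x => f x * log (f x / g x)) μ)
    (hP : ∫ x, f x ∂μ ≠ 0) (hQ : ∫ x, g x ∂μ ≠ 0) :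
    ∫ x, (f x / ∫ x', f x' ∂μ) * log ((f x / ∫ x', f x' ∂μ) / (g x / ∫ x', g x' ∂μ)) ∂μ
      = ((∫ x, f x * log (f x / g x) ∂μ)
          - (∫ x, f x ∂μ) * log ((∫ x, f x ∂μ) / ∫ x, g x ∂μ)) / ∫ x, f x ∂μ := by
  set P := ∫ x, f x ∂μ
  set Q := ∫ x, g x ∂μ
  have hpt : ∀ x, (f x / P) * log ((f x / P) / (g x / Q))
      = (f x * log (f x / g x) - f x * log (P / Q)) / P := fun x => by
    rw [show (f x / P) / (g x / Q) = f x / (g x * (P / Q)) by field_simp, div_mul_eq_mul_div,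
      mul_log_div_mul _ (hg x).ne' (div_ne_zero hP hQ)]
  simp only [hpt]
  rw [integral_div, integral_sub hfg (hfi.mul_const _), integral_mul_const]

end MeasureTheory

open MeasureTheory

theorem stmt10 {𝒳 : Type*} [MeasurableSpace 𝒳] (μ : Measure 𝒳) [IsProbabilityMeasure μ]
    (𝒴 : Type*) [Fintype 𝒴]
    (p q : 𝒳 → 𝒴 → ℝ)
    (hp_meas : ∀ y', Measurable fun x => p x y')
    (hq_meas : ∀ y', Measurable fun x => q x y')
    (hp0 : ∀ x y', 0 ≤ p x y') (hpsum : ∀ x, ∑ y', p x y' = 1)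
    (hq0 : ∀ x y', 0 < q x y') (hqsum : ∀ x, ∑ y', q x y' = 1)
    (ε : ℝ)
    (hint : Integrable (fun x => ∑ y', p x y' * Real.log (p x y' / q x y')) μ)
    (hKL : ∫ x, ∑ y', p x y' * Real.log (p x y' / q x y') ∂μ ≤ ε ^ 2)
    (y : 𝒴) (hPy : 0 < ∫ x, p x y ∂μ) :
    ∫ x, (p x y / ∫ x', p x' y ∂μ) *
        Real.log ((p x y / ∫ x', p x' y ∂μ) / (q x y / ∫ x', q x' y ∂μ)) ∂μ
      ≤ ε ^ 2 / ∫ x, p x y ∂μ := by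
  set P : 𝒴 → ℝ := fun z => ∫ x, p x z ∂μ
  set Q : 𝒴 → ℝ := fun z => ∫ x, q x z ∂μ
  set T : 𝒴 → 𝒳 → ℝ := fun z x => p x z * log (p x z / q x z)
  have hp_int := integrable_apply_of_sum_eq_one (μ := μ) hp_meas hp0 hpsum
  have hq_int := integrable_apply_of_sum_eq_one (μ := μ) hq_meas (fun x z => (hq0 x z).le) hqsum
  have hT_int : ∀ z, Integrable (T z) μ :=
    Integrable.of_le_of_integrable_sum (G := fun z x => p x z - q x z)
      (fun z => ((hp_meas z).mul ((hp_meas z).div (hq_meas z)).log).aestronglyMeasurable)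
      (fun z => (hp_int z).sub (hq_int z)) (fun z x => sub_le_mul_log_div (hp0 x z) (hq0 x z))
      hint
  have hgap (z : 𝒴) : 0 ≤ ∫ x, T z x ∂μ - P z * log (P z / Q z) :=
    sub_nonneg.2 (mul_log_div_integral_le_integral_mul_log_div (hp0 · z) (hq0 · z) (hp_int z)
      (hq_int z) (hT_int z))
  have hQ_pos (z : 𝒴) : 0 < Q z :=
    integral_pos_of_integral_pos (fun _ => zero_le_one) (hq0 · z) (integrable_const 1) (hq_int z)
      (by simp)
  have hgibbs : 0 ≤ ∑ z, P z * log (P z / Q z) :=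
    Finset.sum_mul_log_div_nonneg _ (fun z _ => integral_nonneg (hp0 · z)) (fun z _ => hQ_pos z)
      ((sum_integral_eq_one hp_int hpsum).trans (sum_integral_eq_one hq_int hqsum).symm)
  rw [integral_posterior_mul_log_div (hq0 · y) (hp_int y) (hT_int y) hPy.ne' (hQ_pos y).ne']
  refine div_le_div_of_nonneg_right ?_ hPy.le
  calc ∫ x, T y x ∂μ - P y * log (P y / Q y)
      ≤ ∑ z, (∫ x, T z x ∂μ - P z * log (P z / Q z)) :=
        Finset.single_le_sum (fun z _ => hgap z) (Finset.mem_univ y)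
    _ ≤ ∑ z, (∫ x, T z x ∂μ - P z * log (P z / Q z)) + ∑ z, P z * log (P z / Q z) :=
        le_add_of_nonneg_right hgibbs
    _ = ∫ x, ∑ z, T z x ∂μ := by
        rw [Finset.sum_sub_distrib, sub_add_cancel, integral_finsetSum _ fun z _ => hT_int z]
    _ ≤ ε ^ 2 := hKL
end

section
/- Let (𝒳, 𝒜, μ) be a probability space, 𝒴 a finite label set, and p, q conditional label probabilities on 𝒴 with p(y'|x) > 0 and q(y'|x) > 0 for all x, y'. Suppose the expected conditional KL divergence satisfies ∫ Σ_{y'∈𝒴} p(y'|x) log(p(y'|x)/q(y'|x)) dμ(x) ≤ ε² for some ε ≥ 0. Fix a label y with P(y) = ∫ p(y|x) dμ(x) > 0. Then ∫ (p(y|x)/P(y)) · | log p(y|x) − log q(y|x) | dμ(x) ≤ ε²/P(y) + 2.2 ε / P(y)^{3/2}. -/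
open MeasureTheory Real

/-!
Pointwise, with `a = p(y|x)` and `b = q(y|x)`, the inequality `log t ≤ t - 1` at `t = √(b/a)` gives
`a |log a - log b| ≤ (a log (a/b) - (a - b)) + 2 √a |√a - √b|`
and `(√a - √b)² ≤ a log (a/b) - (a - b)`. As `p(·|x)` and `q(·|x)` both sum to one, the KL
divergence at `x` is the sum over all labels of these nonnegative terms, so it dominates both the
first term and `(√a - √b)²`. By Cauchy–Schwarz, `∫ 2 √a |√a - √b| ≤ 2 √P(y) ε`, so the unnormalised
integral is at most `ε² + 2 ε √P(y)`; dividing by `P(y) ≤ 1` and using `√P(y) ≥ P(y) √P(y)` gives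
the bound.
-/

lemma mul_log_div_le_two_mul_sqrt_mul_sub {a b : ℝ} (ha : 0 < a) (hb : 0 < b) :
    a * log (b / a) ≤ 2 * √a * (√b - √a) := by
  have hba : b / a = (√b / √a) ^ 2 := by rw [div_pow, sq_sqrt hb.le, sq_sqrt ha.le]
  calc a * log (b / a) = 2 * a * log (√b / √a) := by rw [hba, log_pow]; push_cast; ring
    _ ≤ 2 * a * (√b / √a - 1) := by gcongr; exact log_le_sub_one_of_pos (by positivity)
    _ = 2 * √a * (√b - √a) := by
      field_simp; linear_combination (-(√b - √a)) * sq_sqrt ha.le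

lemma sq_sqrt_sub_sqrt_le_mul_log_div_sub {a b : ℝ} (ha : 0 < a) (hb : 0 < b) :
    (√a - √b) ^ 2 ≤ a * log (a / b) - (a - b) := by
  have h := mul_log_div_le_two_mul_sqrt_mul_sub ha hb
  rw [← inv_div, log_inv] at h
  nlinarith [sq_sqrt ha.le, sq_sqrt hb.le]

lemma mul_abs_log_sub_log_le {a b : ℝ} (ha : 0 < a) (hb : 0 < b) :
    a * |log a - log b| ≤ (a * log (a / b) - (a - b)) + 2 * √a * |√a - √b| := by
  rcases le_total b a with hab | hab
  · have hs : √b ≤ √a := sqrt_le_sqrt hab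
    rw [abs_of_nonneg (sub_nonneg.2 (log_le_log hb hab)), abs_of_nonneg (sub_nonneg.2 hs),
      ← log_div ha.ne' hb.ne']
    nlinarith [sq_sqrt ha.le, sq_sqrt hb.le]
  · have hs : √a ≤ √b := sqrt_le_sqrt hab
    rw [abs_of_nonpos (sub_nonpos.2 (log_le_log ha hab)), abs_of_nonpos (sub_nonpos.2 hs),
      neg_sub, neg_sub, ← log_div hb.ne' ha.ne']
    nlinarith [mul_log_div_le_two_mul_sqrt_mul_sub ha hb, sq_nonneg (√a - √b),
      sq_sqrt_sub_sqrt_le_mul_log_div_sub ha hb]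

lemma integral_mul_le_sqrt_mul_sqrt {α : Type*} [MeasurableSpace α] {μ : Measure α}
    {f g : α → ℝ} (hf₀ : 0 ≤ᵐ[μ] f) (hg₀ : 0 ≤ᵐ[μ] g) (hf : MemLp f 2 μ) (hg : MemLp g 2 μ) :
    ∫ x, f x * g x ∂μ ≤ √(∫ x, f x ^ 2 ∂μ) * √(∫ x, g x ^ 2 ∂μ) := by
  have := integral_mul_le_Lp_mul_Lq_of_nonneg HolderConjugate.two_two hf₀ hg₀
    (by simpa using hf) (by simpa using hg)
  simpa [sqrt_eq_rpow] using this

section ProbabilityVector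

variable {ι : Type*} [Fintype ι] {p q : ι → ℝ}

lemma le_one_of_sum_eq_one (hp₀ : ∀ i, 0 ≤ p i) (hp : ∑ i, p i = 1) (j : ι) : p j ≤ 1 :=
  hp ▸ Finset.single_le_sum (fun i _ => hp₀ i) (Finset.mem_univ j)

lemma mul_log_div_sub_le_sum_mul_log_div (hp₀ : ∀ i, 0 < p i) (hq₀ : ∀ i, 0 < q i)
    (hp : ∑ i, p i = 1) (hq : ∑ i, q i = 1) (j : ι) :
    p j * log (p j / q j) - (p j - q j) ≤ ∑ i, p i * log (p i / q i) := by
  have hsum : ∑ i, p i * log (p i / q i) = ∑ i, (p i * log (p i / q i) - (p i - q i)) := by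
    simp only [Finset.sum_sub_distrib, hp, hq, sub_self, sub_zero]
  rw [hsum]
  exact Finset.single_le_sum
    (fun i _ => (sq_nonneg _).trans (sq_sqrt_sub_sqrt_le_mul_log_div_sub (hp₀ i) (hq₀ i)))
    (Finset.mem_univ j)

end ProbabilityVector

lemma integral_mul_abs_log_sub_log_le {𝒳 𝒴 : Type*} [MeasurableSpace 𝒳] {μ : Measure 𝒳}
    [IsFiniteMeasure μ] [Fintype 𝒴] {p q : 𝒳 → 𝒴 → ℝ}
    (hp_meas : ∀ y', Measurable fun x => p x y') (hq_meas : ∀ y', Measurable fun x => q x y')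
    (hp0 : ∀ x y', 0 < p x y') (hpsum : ∀ x, ∑ y', p x y' = 1)
    (hq0 : ∀ x y', 0 < q x y') (hqsum : ∀ x, ∑ y', q x y' = 1) {ε : ℝ} (hε : 0 ≤ ε)
    (hint : Integrable (fun x => ∑ y', p x y' * log (p x y' / q x y')) μ)
    (hKL : ∫ x, ∑ y', p x y' * log (p x y' / q x y') ∂μ ≤ ε ^ 2) (y : 𝒴) :
    ∫ x, p x y * |log (p x y) - log (q x y)| ∂μ ≤ ε ^ 2 + 2 * ε * √(∫ x, p x y ∂μ) := by
  set K := fun x => ∑ y', p x y' * log (p x y' / q x y')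
  set d := fun x => |√(p x y) - √(q x y)|
  have hKy x : p x y * log (p x y / q x y) - (p x y - q x y) ≤ K x :=
    mul_log_div_sub_le_sum_mul_log_div (hp0 x) (hq0 x) (hpsum x) (hqsum x) y
  have hdK x : d x ^ 2 ≤ K x := by
    rw [sq_abs]; exact (sq_sqrt_sub_sqrt_le_mul_log_div_sub (hp0 x y) (hq0 x y)).trans (hKy x)
  have hpt x : p x y * |log (p x y) - log (q x y)| ≤ K x + 2 * (√(p x y) * d x) := by
    have := mul_abs_log_sub_log_le (hp0 x y) (hq0 x y); linarith [hKy x]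
  have hd_meas : Measurable d :=
    ((hp_meas y).sqrt.sub (hq_meas y).sqrt).abs
  have hp_int : Integrable (fun x => p x y) μ :=
    Integrable.of_bound (hp_meas y).aestronglyMeasurable 1 <| .of_forall fun x => by
      rw [Real.norm_of_nonneg (hp0 x y).le]
      exact le_one_of_sum_eq_one (fun i => (hp0 x i).le) (hpsum x) y
  have hsqrt_p : MemLp (fun x => √(p x y)) 2 μ := by
    refine (memLp_two_iff_integrable_sq (hp_meas y).sqrt.aestronglyMeasurable).2 ?_
    simpa only [sq_sqrt (hp0 _ y).le] using hp_int
  have hd2 : MemLp d 2 μ := by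
    refine (memLp_two_iff_integrable_sq hd_meas.aestronglyMeasurable).2 <|
      hint.mono' (hd_meas.pow_const 2).aestronglyMeasurable <| .of_forall fun x => ?_
    rw [Real.norm_of_nonneg (sq_nonneg _)]; exact hdK x
  have hprod : Integrable (fun x => √(p x y) * d x) μ := hsqrt_p.integrable_mul hd2
  have hCS : ∫ x, √(p x y) * d x ∂μ ≤ √(∫ x, p x y ∂μ) * ε := by
    refine (integral_mul_le_sqrt_mul_sqrt (.of_forall fun x => sqrt_nonneg _)
      (.of_forall fun x => abs_nonneg _) hsqrt_p hd2).trans ?_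
    simp only [sq_sqrt (hp0 _ y).le]
    gcongr
    exact sqrt_le_iff.2 ⟨hε, (integral_mono hd2.integrable_sq hint hdK).trans hKL⟩
  calc ∫ x, p x y * |log (p x y) - log (q x y)| ∂μ
      ≤ ∫ x, (K x + 2 * (√(p x y) * d x)) ∂μ := by
        exact integral_mono_of_nonneg
          (.of_forall fun x => mul_nonneg (hp0 x y).le (abs_nonneg _))
          (hint.add (hprod.const_mul 2)) (.of_forall hpt)
    _ = ∫ x, K x ∂μ + 2 * ∫ x, √(p x y) * d x ∂μ := by
        rw [integral_add hint (hprod.const_mul 2), integral_const_mul]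
    _ ≤ ε ^ 2 + 2 * ε * √(∫ x, p x y ∂μ) := by linarith

theorem stmt12 {𝒳 : Type*} [MeasurableSpace 𝒳] (μ : Measure 𝒳) [IsProbabilityMeasure μ]
    (𝒴 : Type*) [Fintype 𝒴]
    (p q : 𝒳 → 𝒴 → ℝ)
    (hp_meas : ∀ y', Measurable fun x => p x y')
    (hq_meas : ∀ y', Measurable fun x => q x y')
    (hp0 : ∀ x y', 0 < p x y') (hpsum : ∀ x, ∑ y', p x y' = 1)
    (hq0 : ∀ x y', 0 < q x y') (hqsum : ∀ x, ∑ y', q x y' = 1)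
    (ε : ℝ) (hε : 0 ≤ ε)
    (hint : Integrable (fun x => ∑ y', p x y' * Real.log (p x y' / q x y')) μ)
    (hKL : ∫ x, ∑ y', p x y' * Real.log (p x y' / q x y') ∂μ ≤ ε ^ 2)
    (y : 𝒴) (hPy : 0 < ∫ x, p x y ∂μ) :
    ∫ x, (p x y / ∫ x', p x' y ∂μ) * |Real.log (p x y) - Real.log (q x y)| ∂μ
      ≤ ε ^ 2 / (∫ x, p x y ∂μ) +
        2.2 * ε / (∫ x, p x y ∂μ) ^ ((3 : ℝ) / 2) := by
  set P := ∫ x, p x y ∂μ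
  have hP1 : P ≤ 1 := by
    simpa using integral_mono_of_nonneg (.of_forall fun x => (hp0 x y).le)
      (integrable_const (μ := μ) (1 : ℝ))
      (.of_forall fun x => le_one_of_sum_eq_one (fun i => (hp0 x i).le) (hpsum x) y)
  have hP32 : P ^ ((3 : ℝ) / 2) = P * √P := by
    rw [show (3 : ℝ) / 2 = 1 + 1 / 2 by norm_num, rpow_add hPy, rpow_one, ← sqrt_eq_rpow]
  simp_rw [div_mul_eq_mul_div]
  rw [integral_div, hP32]
  calc (∫ x, p x y * |log (p x y) - log (q x y)| ∂μ) / P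
      ≤ (ε ^ 2 + 2 * ε * √P) / P := by
        gcongr
        exact integral_mul_abs_log_sub_log_le hp_meas hq_meas hp0 hpsum hq0 hqsum hε hint hKL y
    _ = ε ^ 2 / P + 2 * ε * P / (P * √P) := by
        field_simp
        linear_combination 2 * ε * sq_sqrt hPy.le
    _ ≤ ε ^ 2 / P + 2.2 * ε / (P * √P) := by
        gcongr ε ^ 2 / P + ?_ / (P * √P); nlinarith
end

section
/- Let σ(s) = 1/(1 + e^{−s}) denote the logistic function and let f : ℝ → [0, ∞) be Lebesgue integrable with ∫_ℝ f(x) dx = 1. Then: (i) lim_{ε → 0⁺} ε^{−2} ∫_ℝ log cosh( ε sin(x/√ε) ) f(x) dx = 1/4; and (ii) lim_{ε → 0⁺} ε^{−1} ∫_ℝ ( (1 − σ(2ε sin(x/√ε))) · 2√ε cos(x/√ε) )² f(x) dx = 1/2. In particular, for the classifier q_ε(x) = σ(2ε sin(x/√ε)) against the constant true conditional label probability 1/2 (with gradient zero), the expected conditional KL divergence ∫ KL(Bern(1/2) ‖ Bern(q_ε(x))) f(x) dx = log cosh(ε sin(·/√ε))-integral is Θ(ε²), while the expected squared guidance error ∫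 ( d/dx log q_ε(x) )² f(x) dx is Θ(ε), so the ε-dependence of the guidance-error bound in terms of the square root of the classification error cannot be improved. -/
/-! Uniformly in `|s| ≤ 1` and `|c| ≤ 1`, `ε⁻² log cosh (ε s) = s² / 2 + O(ε²)` and, since the
logistic function is `1/4`-Lipschitz with value `1/2` at `0`,
`ε⁻¹ ((1 - σ (2 ε s)) · 2 √ε c)² = c² + O(ε)`. As `f` is a probability density, the two integrals
are thus `o(1)`-close to `½ ∫ sin² (x / √ε) f(x) dx` and `∫ cos² (x / √ε) f(x) dx`. Writing
`sin² = (1 - cos (2 ·)) / 2` and `cos² = (1 + cos (2 ·)) / 2`, these tend to `1/4` and `1/2` by the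
Riemann–Lebesgue lemma. -/

open MeasureTheory Filter

/-- The logistic (sigmoid) function. -/
noncomputable def logistic (s : ℝ) : ℝ := (1 + Real.exp (-s))⁻¹

open Real Topology Set
open scoped FourierTransform

section ProbabilityDensity

variable {α : Type*} [MeasurableSpace α] {μ : Measure α} {f : α → ℝ}

theorem abs_integral_mul_le_of_abs_le (hf0 : ∀ x, 0 ≤ f x) (hf : Integrable f μ)
    (hf1 : ∫ x, f x ∂μ = 1) {g : α → ℝ} {B : ℝ} (hB : ∀ x, |g x| ≤ B) :
    |∫ x, g x * f x ∂μ| ≤ B := by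
  calc |∫ x, g x * f x ∂μ| ≤ ∫ x, B * f x ∂μ := by
        rw [← Real.norm_eq_abs]
        refine norm_integral_le_of_norm_le (hf.const_mul B) (ae_of_all _ fun x => ?_)
        rw [Real.norm_eq_abs, abs_mul, abs_of_nonneg (hf0 x)]
        exact mul_le_mul_of_nonneg_right (hB x) (hf0 x)
    _ = B := by rw [integral_const_mul, hf1, mul_one]

theorem tendsto_integral_mul_of_abs_sub_le (hf0 : ∀ x, 0 ≤ f x) (hf : Integrable f μ)
    (hf1 : ∫ x, f x ∂μ = 1) {ι : Type*} {l : Filter ι} {g h : ι → α → ℝ} {δ : ι → ℝ} {L : ℝ}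
    (hgm : ∀ᶠ i in l, AEStronglyMeasurable (g i) μ)
    (hhm : ∀ᶠ i in l, AEStronglyMeasurable (h i) μ)
    (hhi : ∀ᶠ i in l, Integrable (fun x => h i x * f x) μ)
    (hgh : ∀ᶠ i in l, ∀ x, |g i x - h i x| ≤ δ i) (hδ : Tendsto δ l (𝓝 0))
    (hL : Tendsto (fun i => ∫ x, h i x * f x ∂μ) l (𝓝 L)) :
    Tendsto (fun i => ∫ x, g i x * f x ∂μ) l (𝓝 L) := by
  have hdiff : Tendsto (fun i => (∫ x, g i x * f x ∂μ) - ∫ x, h i x * f x ∂μ) l (𝓝 0) := by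
    refine squeeze_zero_norm' ?_ hδ
    filter_upwards [hgm, hhm, hhi, hgh] with i hgim hhim hhfi hghi
    have hgfi : Integrable (fun x => g i x * f x) μ := by
      refine ((hf.bdd_mul (hgim.sub hhim) (ae_of_all _ hghi)).add hhfi).congr
        (ae_of_all _ fun x => ?_)
      simp [sub_mul]
    rw [Real.norm_eq_abs, ← integral_sub hgfi hhfi]
    simpa only [sub_mul] using abs_integral_mul_le_of_abs_le hf0 hf hf1 hghi
  simpa using hL.add hdiff

end ProbabilityDensity

section RiemannLebesgue

variable {f : ℝ → ℝ}

theorem tendsto_integral_cos_mul_atTop (hf : Integrable f) :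
    Tendsto (fun t => ∫ x, cos (t * x) * f x) atTop (𝓝 0) := by
  have hre : ∀ w : ℝ, (∫ v, 𝐞 (-(v * w)) • (f v : ℂ)).re = ∫ v, cos (2 * π * w * v) * f v := by
    intro w
    have hint : Integrable (fun v => 𝐞 (-(v * w)) • (f v : ℂ)) :=
      (fourierIntegral_convergent_iff' (ContinuousLinearMap.mul ℝ ℝ) w).2 hf.ofReal
    rw [← RCLike.re_to_complex, ← integral_re hint]
    congr with v
    rw [Circle.smul_def, Real.fourierChar_apply, smul_eq_mul, RCLike.re_to_complex,
      Complex.re_mul_ofReal, Complex.exp_ofReal_mul_I_re, ← cos_neg]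
    ring_nf
  have hRL := (Complex.continuous_re.tendsto 0).comp
    (Real.tendsto_integral_exp_smul_cocompact fun v => (f v : ℂ))
  have hscale : Tendsto (fun t : ℝ => t / (2 * π)) atTop (cocompact ℝ) :=
    (tendsto_id.atTop_div_const (by positivity)).mono_right atTop_le_cocompact
  convert hRL.comp hscale using 1
  · ext t
    simp only [Function.comp_apply, hre]
    congr with x
    field_simp
  · simp

theorem tendsto_integral_sin_mul_sq_mul_atTop (hf : Integrable f) (hf1 : ∫ x, f x = 1) :
    Tendsto (fun t => ∫ x, sin (t * x) ^ 2 * f x) atTop (𝓝 (1 / 2)) := by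
  have hcos : Tendsto (fun t => ∫ x, cos (2 * t * x) * f x) atTop (𝓝 0) :=
    (tendsto_integral_cos_mul_atTop hf).comp (tendsto_id.const_mul_atTop two_pos)
  have hsin : ∀ t, ∫ x, sin (t * x) ^ 2 * f x = 1 / 2 - (∫ x, cos (2 * t * x) * f x) / 2 := by
    intro t
    have hcosi : Integrable fun x => cos (2 * t * x) * f x :=
      hf.bdd_mul (by fun_prop) (ae_of_all _ fun x => abs_cos_le_one _)
    calc ∫ x, sin (t * x) ^ 2 * f x = ∫ x, (f x / 2 - cos (2 * t * x) * f x / 2) := by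
          congr with x
          rw [sin_sq_eq_half_sub, mul_assoc]
          ring
      _ = 1 / 2 - (∫ x, cos (2 * t * x) * f x) / 2 := by
          rw [integral_sub (hf.div_const 2) (hcosi.div_const 2), integral_div, integral_div, hf1]
  simp_rw [hsin]
  convert (hcos.div_const 2).const_sub (1 / 2) using 2
  norm_num

theorem tendsto_integral_cos_mul_sq_mul_atTop (hf : Integrable f) (hf1 : ∫ x, f x = 1) :
    Tendsto (fun t => ∫ x, cos (t * x) ^ 2 * f x) atTop (𝓝 (1 / 2)) := by
  have hsin := tendsto_integral_sin_mul_sq_mul_atTop hf hf1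
  have hsum : ∀ t, ∫ x, cos (t * x) ^ 2 * f x = 1 - ∫ x, sin (t * x) ^ 2 * f x := by
    intro t
    have hsini : Integrable fun x => sin (t * x) ^ 2 * f x :=
      hf.bdd_mul (by fun_prop) (ae_of_all _ fun x => by
        rw [norm_eq_abs, abs_of_nonneg (sq_nonneg _)]; exact sin_sq_le_one _)
    rw [← hf1, ← integral_sub hf hsini]
    congr with x
    rw [cos_sq']
    ring
  simp_rw [hsum]
  convert hsin.const_sub 1 using 2
  norm_num

end RiemannLebesgue

namespace Real

theorem log_cosh_le (u : ℝ) : log (cosh u) ≤ u ^ 2 / 2 := by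
  simpa using log_le_log (cosh_pos u) (cosh_le_exp_half_sq u)

theorem one_add_sq_div_two_le_cosh (u : ℝ) : 1 + u ^ 2 / 2 ≤ cosh u := by
  have hcosh : cosh u = 1 + 2 * sinh (u / 2) ^ 2 := by
    have h := cosh_two_mul (u / 2)
    rw [cosh_sq', mul_div_cancel₀ u two_ne_zero] at h
    linarith
  have hsinh : (u / 2) ^ 2 ≤ sinh (u / 2) ^ 2 := by
    rw [← sq_abs, ← sq_abs (sinh _), abs_sinh]
    exact pow_le_pow_left₀ (abs_nonneg _) (self_le_sinh_iff.2 (abs_nonneg _)) 2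
  rw [hcosh]
  linarith

theorem abs_log_cosh_sub_sq_div_two_le (u : ℝ) : |log (cosh u) - u ^ 2 / 2| ≤ u ^ 4 / 4 := by
  have ha : 0 ≤ u ^ 2 / 2 := by positivity
  have hlower : u ^ 2 / 2 - u ^ 4 / 4 ≤ log (cosh u) :=
    calc u ^ 2 / 2 - u ^ 4 / 4 ≤ (u ^ 2 / 2) / (1 + u ^ 2 / 2) := by
          rw [le_div_iff₀ (by positivity)]
          nlinarith [pow_nonneg ha 3]
      _ = 1 - (1 + u ^ 2 / 2)⁻¹ := by field_simp; ring
      _ ≤ log (1 + u ^ 2 / 2) := one_sub_inv_le_log_of_pos (by positivity)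
      _ ≤ log (cosh u) := log_le_log (by positivity) (one_add_sq_div_two_le_cosh u)
  rw [abs_le]
  constructor <;> nlinarith [log_cosh_le u, pow_nonneg ha 2]

theorem abs_sigmoid_sub_half_le (a : ℝ) : |sigmoid a - 1 / 2| ≤ |a| / 4 := by
  have hderiv : ∀ x, ‖deriv sigmoid x‖ ≤ 1 / 4 := fun x => by
    rw [deriv_sigmoid, norm_eq_abs, abs_of_nonneg (mul_nonneg (sigmoid_nonneg x)
      (sub_nonneg.2 (sigmoid_le_one x)))]
    nlinarith [sq_nonneg (sigmoid x - 1 / 2)]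
  have := convex_univ.norm_image_sub_le_of_norm_deriv_le (fun x _ => differentiableAt_sigmoid)
    (fun x _ => hderiv x) (mem_univ 0) (mem_univ a)
  rw [sigmoid_zero] at this
  simpa [norm_eq_abs, div_eq_inv_mul] using this

theorem abs_four_mul_one_sub_sigmoid_sq_sub_one_le (a : ℝ) :
    |4 * (1 - sigmoid a) ^ 2 - 1| ≤ 3 * |a| / 2 := by
  have hfactor : 4 * (1 - sigmoid a) ^ 2 - 1 = -2 * (sigmoid a - 1 / 2) * (3 - 2 * sigmoid a) := by
    ring
  have h3 : |3 - 2 * sigmoid a| ≤ 3 := by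
    rw [abs_le]
    constructor <;> linarith [sigmoid_pos a, sigmoid_le_one a]
  rw [hfactor, abs_mul, abs_mul]
  calc |-2| * |sigmoid a - 1 / 2| * |3 - 2 * sigmoid a| ≤ 2 * (|a| / 4) * 3 := by
        rw [abs_neg, abs_two]
        gcongr
        exact abs_sigmoid_sub_half_le a
    _ = 3 * |a| / 2 := by ring

end Real

theorem logistic_eq_sigmoid : logistic = sigmoid := rfl

@[fun_prop]
theorem continuous_logistic : Continuous logistic := continuous_sigmoid

theorem abs_inv_sq_mul_log_cosh_mul_sub_le {ε s : ℝ} (hε : ε ≠ 0) (hs : |s| ≤ 1) :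
    |(ε ^ 2)⁻¹ * log (cosh (ε * s)) - s ^ 2 / 2| ≤ ε ^ 2 / 4 := by
  have hs2 : s ^ 2 ≤ 1 := (sq_le_one_iff_abs_le_one s).2 hs
  calc |(ε ^ 2)⁻¹ * log (cosh (ε * s)) - s ^ 2 / 2|
      = (ε ^ 2)⁻¹ * |log (cosh (ε * s)) - (ε * s) ^ 2 / 2| := by
        have hsplit : (ε ^ 2)⁻¹ * log (cosh (ε * s)) - s ^ 2 / 2
            = (ε ^ 2)⁻¹ * (log (cosh (ε * s)) - (ε * s) ^ 2 / 2) := by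
          field_simp
        rw [hsplit, abs_mul, abs_of_pos (by positivity)]
    _ ≤ (ε ^ 2)⁻¹ * ((ε * s) ^ 4 / 4) := by gcongr; exact abs_log_cosh_sub_sq_div_two_le _
    _ = ε ^ 2 * (s ^ 2) ^ 2 / 4 := by field_simp
    _ ≤ ε ^ 2 / 4 := by
        gcongr
        exact mul_le_of_le_one_right (sq_nonneg ε) (pow_le_one₀ (sq_nonneg s) hs2)

theorem abs_inv_mul_guidance_sq_sub_le {ε s c : ℝ} (hε : 0 < ε) (hs : |s| ≤ 1) (hc : |c| ≤ 1) :
    |ε⁻¹ * ((1 - logistic (2 * ε * s)) * (2 * √ε * c)) ^ 2 - c ^ 2| ≤ 3 * ε := by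
  have hrw : ε⁻¹ * ((1 - logistic (2 * ε * s)) * (2 * √ε * c)) ^ 2 - c ^ 2
      = (4 * (1 - sigmoid (2 * ε * s)) ^ 2 - 1) * c ^ 2 := by
    rw [logistic_eq_sigmoid, mul_pow, mul_pow, mul_pow, sq_sqrt hε.le]
    field_simp
    ring
  have hc2 : c ^ 2 ≤ 1 := (sq_le_one_iff_abs_le_one c).2 hc
  rw [hrw, abs_mul, abs_of_nonneg (sq_nonneg c)]
  calc |4 * (1 - sigmoid (2 * ε * s)) ^ 2 - 1| * c ^ 2 ≤ 3 * |2 * ε * s| / 2 * 1 := by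
        gcongr
        exact abs_four_mul_one_sub_sigmoid_sq_sub_one_le _
    _ = 3 * ε * |s| := by rw [abs_mul, abs_mul, abs_two, abs_of_pos hε]; ring
    _ ≤ 3 * ε := by nlinarith

theorem tendsto_inv_sqrt_nhdsGT_zero : Tendsto (fun ε => (√ε)⁻¹) (𝓝[>] 0) atTop :=
  tendsto_inv_nhdsGT_zero.comp <| tendsto_nhdsWithin_iff.2
    ⟨tendsto_nhdsWithin_of_tendsto_nhds (continuous_sqrt.tendsto' 0 0 sqrt_zero),
      by filter_upwards [self_mem_nhdsWithin] with ε hε using sqrt_pos.2 hε⟩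

section Limits

variable {f : ℝ → ℝ}

theorem tendsto_inv_sq_mul_integral_log_cosh_mul_sin (hf0 : ∀ x, 0 ≤ f x) (hf : Integrable f)
    (hf1 : ∫ x, f x = 1) :
    Tendsto (fun ε : ℝ => (ε ^ 2)⁻¹ * ∫ x, log (cosh (ε * sin (x / √ε))) * f x)
      (𝓝[>] 0) (𝓝 (1 / 4)) := by
  have hsin := (tendsto_integral_sin_mul_sq_mul_atTop hf hf1).comp tendsto_inv_sqrt_nhdsGT_zero
  simp only [Function.comp_def, ← div_eq_inv_mul] at hsin
  have hδ : Tendsto (fun ε : ℝ => ε ^ 2 / 4) (𝓝[>] 0) (𝓝 0) :=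
    tendsto_nhdsWithin_of_tendsto_nhds (Continuous.tendsto' (by fun_prop) _ _ (by simp))
  refine (tendsto_integral_mul_of_abs_sub_le hf0 hf hf1
    (g := fun ε x => (ε ^ 2)⁻¹ * log (cosh (ε * sin (x / √ε))))
    (h := fun ε x => sin (x / √ε) ^ 2 / 2)
    (.of_forall fun ε => (by fun_prop : Measurable _).aestronglyMeasurable)
    (.of_forall fun ε => by fun_prop) (.of_forall fun ε => ?_) ?_ hδ ?_).congr fun ε => ?_
  · refine hf.bdd_mul (c := 1) (by fun_prop) (ae_of_all _ fun x => ?_)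
    rw [norm_eq_abs, abs_of_nonneg (by positivity)]
    linarith [sin_sq_le_one (x / √ε)]
  · filter_upwards [self_mem_nhdsWithin] with ε (hε : 0 < ε) x
    exact abs_inv_sq_mul_log_cosh_mul_sub_le hε.ne' (abs_sin_le_one _)
  · convert hsin.div_const 2 using 2 with ε
    · simp only [div_mul_eq_mul_div, integral_div]
    · norm_num
  · rw [← integral_const_mul]
    simp only [mul_assoc]

theorem tendsto_inv_mul_integral_guidance_sq (hf0 : ∀ x, 0 ≤ f x) (hf : Integrable f)
    (hf1 : ∫ x, f x = 1) :
    Tendsto (fun ε : ℝ => ε⁻¹ * ∫ x, ((1 - logistic (2 * ε * sin (x / √ε))) *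
        (2 * √ε * cos (x / √ε))) ^ 2 * f x) (𝓝[>] 0) (𝓝 (1 / 2)) := by
  have hcos := (tendsto_integral_cos_mul_sq_mul_atTop hf hf1).comp tendsto_inv_sqrt_nhdsGT_zero
  simp only [Function.comp_def, ← div_eq_inv_mul] at hcos
  have hδ : Tendsto (fun ε : ℝ => 3 * ε) (𝓝[>] 0) (𝓝 0) :=
    tendsto_nhdsWithin_of_tendsto_nhds (Continuous.tendsto' (by fun_prop) _ _ (by simp))
  refine (tendsto_integral_mul_of_abs_sub_le hf0 hf hf1
    (g := fun ε x => ε⁻¹ * ((1 - logistic (2 * ε * sin (x / √ε))) * (2 * √ε * cos (x / √ε))) ^ 2)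
    (h := fun ε x => cos (x / √ε) ^ 2) (.of_forall fun ε => by fun_prop)
    (.of_forall fun ε => by fun_prop) (.of_forall fun ε => ?_) ?_ hδ hcos).congr fun ε => ?_
  · refine hf.bdd_mul (c := 1) (by fun_prop) (ae_of_all _ fun x => ?_)
    rw [norm_eq_abs, abs_of_nonneg (sq_nonneg _)]
    exact cos_sq_le_one _
  · filter_upwards [self_mem_nhdsWithin] with ε (hε : 0 < ε) x
    exact abs_inv_mul_guidance_sq_sub_le hε (abs_sin_le_one _) (abs_cos_le_one _)
  · rw [← integral_const_mul]
    simp only [mul_assoc]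

end Limits

theorem stmt19 (f : ℝ → ℝ) (hf0 : ∀ x, 0 ≤ f x) (hf : Integrable f)
    (hf1 : ∫ x, f x = 1) :
    Tendsto (fun ε : ℝ =>
        (ε ^ 2)⁻¹ * ∫ x, Real.log (Real.cosh (ε * Real.sin (x / Real.sqrt ε))) * f x)
      (nhdsWithin 0 (Set.Ioi 0)) (nhds (1 / 4)) ∧
    Tendsto (fun ε : ℝ =>
        ε⁻¹ * ∫ x, ((1 - logistic (2 * ε * Real.sin (x / Real.sqrt ε))) *
          (2 * Real.sqrt ε * Real.cos (x / Real.sqrt ε))) ^ 2 * f x)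
      (nhdsWithin 0 (Set.Ioi 0)) (nhds (1 / 2)) :=
  ⟨tendsto_inv_sq_mul_integral_log_cosh_mul_sin hf0 hf hf1,
    tendsto_inv_mul_integral_guidance_sq hf0 hf hf1⟩
end
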